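/- Let σ ∈ S_m be a permutation mapping the set {i_1,…,i_k} onto itself, and let σ' ∈ S_k be the induced permutation defined by σ'(p) = q if and only if σ(i_p) = i_q. Then for every g : S_k → ℝ^d, promotion is equivariant in the sense that (g^{(σ')})↑^{(1,…,m)} = (g↑^{(1,…,m)})^{(σ)}. -/

import Mathlib

/-- `σ ∈ S_m|_{(i_1,…,i_k)}`: the permutation `σ` of `{1,…,m}` sends each of the
first `k` positions into the set `{i_1,…,i_k}`. -/
def IsRestricted {m k : ℕ} (hkm : k ≤ m) (i : Fin k → Fin m) (σ : Equiv.Perm (Fin m)) : Prop :=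
  ∀ p : Fin k, σ (Fin.castLE hkm p) ∈ Set.range i

-- The restricted permutation `σ↓_{(i_1,…,i_k)}` as a function `{1,…,k} → {1,…,k}`:
-- `σ↓(p) = q` iff `σ(p) = i_q` (well defined when `σ` is restricted and `i` is injective).
noncomputable def restrictFun {m k : ℕ} (hk : 1 ≤ k) (hkm : k ≤ m) (i : Fin k → Fin m)
    (σ : Equiv.Perm (Fin m)) : Fin k → Fin k :=
  haveI : Nonempty (Fin k) := ⟨⟨0, hk⟩⟩
  fun p => Function.invFun i (σ (Fin.castLE hkm p))

-- The restricted permutation `σ↓_{(i_1,…,i_k)}` as an element of `S_k`.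
noncomputable def restrictPerm {m k : ℕ} (hk : 1 ≤ k) (hkm : k ≤ m) (i : Fin k → Fin m)
    (σ : Equiv.Perm (Fin m)) : Equiv.Perm (Fin k) :=
  if h : Function.Bijective (restrictFun hk hkm i σ) then Equiv.ofBijective _ h else 1

-- Narrowing: `f↓_{(i_1,…,i_k)}(ω) = (m−k)!⁻¹ · Σ_{τ restricted, τ↓ = ω} f(τ)`.
open Classical in
noncomputable def narrow {m k : ℕ} (hk : 1 ≤ k) (hkm : k ≤ m) (i : Fin k → Fin m)
    {V : Type*} [AddCommGroup V] [Module ℝ V]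
    (f : Equiv.Perm (Fin m) → V) (ω : Equiv.Perm (Fin k)) : V :=
  ((m - k).factorial : ℝ)⁻¹ •
    ∑ τ : Equiv.Perm (Fin m),
      if IsRestricted hkm i τ ∧ restrictFun hk hkm i τ = ⇑ω then f τ else 0

-- Promotion: `g↑^{(1,…,m)}(τ) = g(τ↓)` if `τ` is restricted, and `0` otherwise.
open Classical in
noncomputable def promote {m k : ℕ} (hk : 1 ≤ k) (hkm : k ≤ m) (i : Fin k → Fin m)
    {V : Type*} [AddCommGroup V] [Module ℝ V]
    (g : Equiv.Perm (Fin k) → V) (τ : Equiv.Perm (Fin m)) : V :=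
  if IsRestricted hkm i τ then g (restrictPerm hk hkm i τ) else 0

/-- Left translation: `h^{(τ)}(π) = h(τ⁻¹ π)`. -/
def lTranslate {G V : Type*} [Group G] (τ : G) (h : G → V) : G → V :=
  fun π => h (τ⁻¹ * π)

/-! If `σ ∘ i = i ∘ σ'`, then `σ` acts on `{i_1,…,i_k}` as `σ'` does on `{1,…,k}`,
so left multiplication by `σ⁻¹` preserves `S_m|_{(i_1,…,i_k)}` and turns `τ↓`
into `σ'⁻¹ τ↓`. -/

section Restriction

variable {m k : ℕ} (hk : 1 ≤ k) (hkm : k ≤ m) {i : Fin k → Fin m}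

theorem apply_restrictFun (hi : Function.Injective i) {τ : Equiv.Perm (Fin m)}
    (hτ : IsRestricted hkm i τ) (p : Fin k) :
    i (restrictFun hk hkm i τ p) = τ (Fin.castLE hkm p) := by
  have : Nonempty (Fin k) := ⟨⟨0, hk⟩⟩
  obtain ⟨a, ha⟩ := hτ p
  rw [restrictFun, ← ha, Function.leftInverse_invFun hi a]

theorem restrictFun_bijective (hi : Function.Injective i) {τ : Equiv.Perm (Fin m)}
    (hτ : IsRestricted hkm i τ) : Function.Bijective (restrictFun hk hkm i τ) := by
  refine Finite.injective_iff_bijective.mp fun p q hpq =>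
    Fin.castLE_injective hkm <| τ.injective ?_
  rw [← apply_restrictFun hk hkm hi hτ, ← apply_restrictFun hk hkm hi hτ, hpq]

theorem apply_restrictPerm (hi : Function.Injective i) {τ : Equiv.Perm (Fin m)}
    (hτ : IsRestricted hkm i τ) (p : Fin k) :
    i (restrictPerm hk hkm i τ p) = τ (Fin.castLE hkm p) := by
  rw [restrictPerm, dif_pos (restrictFun_bijective hk hkm hi hτ), Equiv.ofBijective_apply,
    apply_restrictFun hk hkm hi hτ]

variable {σ : Equiv.Perm (Fin m)} {σ' : Equiv.Perm (Fin k)}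

theorem isRestricted_mul_iff (hσ : Function.Semiconj i σ' σ) (τ : Equiv.Perm (Fin m)) :
    IsRestricted hkm i (σ * τ) ↔ IsRestricted hkm i τ := by
  refine ⟨fun h p => ?_, fun h p => ?_⟩
  · obtain ⟨q, hq⟩ := h p
    refine ⟨σ'⁻¹ q, σ.injective ?_⟩
    rw [← hσ, ← Equiv.Perm.mul_apply, mul_inv_cancel, Equiv.Perm.one_apply, hq,
      Equiv.Perm.mul_apply]
  · obtain ⟨q, hq⟩ := h p
    exact ⟨σ' q, by rw [hσ, hq, Equiv.Perm.mul_apply]⟩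

theorem restrictPerm_mul (hi : Function.Injective i) (hσ : Function.Semiconj i σ' σ)
    {τ : Equiv.Perm (Fin m)} (hτ : IsRestricted hkm i τ) :
    restrictPerm hk hkm i (σ * τ) = σ' * restrictPerm hk hkm i τ :=
  Equiv.ext fun p => hi <| by
    rw [apply_restrictPerm hk hkm hi ((isRestricted_mul_iff hkm hσ τ).mpr hτ),
      Equiv.Perm.mul_apply, Equiv.Perm.mul_apply, hσ, apply_restrictPerm hk hkm hi hτ]

end Restriction

theorem promote_equivariant_general {m k d : ℕ} (hk : 1 ≤ k) (hkm : k ≤ m)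
    (i : Fin k → Fin m) (hi : Function.Injective i)
    (σ : Equiv.Perm (Fin m))
    (σ' : Equiv.Perm (Fin k)) (hσ' : ∀ p q : Fin k, σ' p = q ↔ σ (i p) = i q)
    (g : Equiv.Perm (Fin k) → Fin d → ℝ) :
    promote hk hkm i (lTranslate σ' g) = lTranslate σ (promote hk hkm i g) := by
  have hσ : Function.Semiconj i σ' σ := fun p => ((hσ' p (σ' p)).mp rfl).symm
  have hσ_inv : Function.Semiconj i ⇑σ'⁻¹ ⇑σ⁻¹ :=
    hσ.inverses_right σ'.right_inv σ.left_inv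
  funext τ
  simp only [promote, lTranslate]
  rw [isRestricted_mul_iff hkm hσ_inv]
  split_ifs with hτ
  · rw [restrictPerm_mul hk hkm hi hσ_inv hτ]
  · rfl

theorem promote_equivariant {m k d : ℕ} (hk : 1 ≤ k) (hkm : k ≤ m)
    (i : Fin k → Fin m) (hi : Function.Injective i)
    (σ : Equiv.Perm (Fin m)) (hσ : ⇑σ '' Set.range i = Set.range i)
    (σ' : Equiv.Perm (Fin k)) (hσ' : ∀ p q : Fin k, σ' p = q ↔ σ (i p) = i q)
    (g : Equiv.Perm (Fin k) → Fin d → ℝ) :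
    promote hk hkm i (lTranslate σ' g) = lTranslate σ (promote hk hkm i g) :=
  promote_equivariant_general hk hkm i hi σ σ' hσ' g
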